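/- Let x : ℝ → ℝ³ be C³ with x' compactly supported and |x'(t)| ≤ v₀ < 1 for all t, and define J(p) = ∫_ℝ x'(t) e^{iψ(p,t)} dt. Then there is a constant C such that |J(p)| ≤ C/|p|² for all p with |p| ≥ 1. -/

import Mathlib

open MeasureTheory Complex

noncomputable section

abbrev E3 := EuclideanSpace ℝ (Fin 3)
abbrev C3 := EuclideanSpace ℂ (Fin 3)

/-- The inclusion `ℝ³ → ℂ³`. -/
def cmap (v : E3) : C3 := WithLp.toLp 2 (fun i => (v i : ℂ))

/-- The phase `ψ(p,t) = |p| t − p·x(t)`. -/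
def psi (x : ℝ → E3) (p : E3) (t : ℝ) : ℝ := ‖p‖ * t - (inner ℝ p (x t) : ℝ)

/-- The radiation amplitude `J(p) = ∫ x'(t) e^{iψ(p,t)} dt`. -/
def Jrad (x : ℝ → E3) (p : E3) : C3 :=
  ∫ t : ℝ, Complex.exp (Complex.I * (psi x p t : ℂ)) • cmap (deriv x t)

lemma norm_cmap (v : E3) : ‖cmap v‖ = ‖v‖ := by
  rw [EuclideanSpace.norm_eq, EuclideanSpace.norm_eq]
  congr 1
  refine Finset.sum_congr rfl fun i _ => ?_
  simp [cmap]

def cmapL : E3 →L[ℝ] C3 :=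
  LinearMap.mkContinuous
    { toFun := cmap
      map_add' := fun a b => by
        ext i
        simp [cmap]
      map_smul' := fun r a => by
        ext i
        simp [cmap] }
    1 (fun v => by show ‖cmap v‖ ≤ 1 * ‖v‖; rw [norm_cmap, one_mul])

@[simp] lemma cmapL_apply (v : E3) : cmapL v = cmap v := rfl

set_option maxHeartbeats 2000000 in
/-- for a `C³` trajectory with compactly supported velocity bounded by
`v₀ < 1`, one has `|J(p)| ≤ C/|p|` for `|p| ≥ 1`. -/
theorem Jrad_decay_two
    (x : ℝ → E3) (hx : ContDiff ℝ 3 x) (hsupp : HasCompactSupport (deriv x))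
    (v₀ : ℝ) (hv₀ : v₀ < 1) (hbd : ∀ t, ‖deriv x t‖ ≤ v₀) :
    ∃ C : ℝ, ∀ p : E3, 1 ≤ ‖p‖ → ‖Jrad x p‖ ≤ C / ‖p‖^2 := by
  -- differentiability facts
  have hx' : ContDiff ℝ (2 + 1) x := by exact_mod_cast hx
  have hx1 : Differentiable ℝ x := (contDiff_succ_iff_deriv.mp hx').1
  have hx2 : ContDiff ℝ 2 (deriv x) := (contDiff_succ_iff_deriv.mp hx').2.2
  have hx2' : ContDiff ℝ (1 + 1) (deriv x) := by exact_mod_cast hx2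
  have hd2 : Differentiable ℝ (deriv x) := (contDiff_succ_iff_deriv.mp hx2').1
  have hx3 : ContDiff ℝ 1 (deriv (deriv x)) := (contDiff_succ_iff_deriv.mp hx2').2.2
  have hx3' : ContDiff ℝ (0 + 1) (deriv (deriv x)) := by exact_mod_cast hx3
  have hd3 : Differentiable ℝ (deriv (deriv x)) := (contDiff_succ_iff_deriv.mp hx3').1
  have hc4 : Continuous (deriv (deriv (deriv x))) :=
    ((contDiff_succ_iff_deriv.mp hx3').2.2).continuous
  -- support facts
  set K : Set ℝ := tsupport (deriv x) with hK_def
  have hK : IsCompact K := hsupp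
  have hsupp2 : Function.support (deriv (deriv x)) ⊆ K := support_deriv_subset
  have hsupp3 : Function.support (deriv (deriv (deriv x))) ⊆ K := by
    refine (support_deriv_subset).trans ?_
    exact closure_minimal hsupp2 (isClosed_closure)
  -- choose R
  obtain ⟨r, hr⟩ := hK.isBounded.subset_ball 0
  set R : ℝ := max r 1 with hR_def
  have hR1 : (1:ℝ) ≤ R := le_max_right r 1
  have hR0 : (0:ℝ) < R := lt_of_lt_of_le one_pos hR1
  have hKR : K ⊆ Set.Ioo (-R) R := by
    refine hr.trans ?_
    rw [Real.ball_eq_Ioo]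
    intro t ht
    constructor
    · calc -R ≤ -r := by simp [hR_def]
        _ = 0 - r := by ring
        _ < t := ht.1
    · calc t < 0 + r := ht.2
        _ = r := by ring
        _ ≤ R := le_max_left r 1
  have hRK : ∀ t : ℝ, t ∉ Set.Ioo (-R) R → t ∉ K := fun t ht h => ht (hKR h)
  have hzero1 : ∀ t : ℝ, t ∉ K → deriv x t = 0 := fun t ht =>
    image_eq_zero_of_notMem_tsupport ht
  have hzero2 : ∀ t : ℝ, t ∉ K → deriv (deriv x) t = 0 := by
    intro t ht
    by_contra h
    exact ht (hsupp2 h)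
  -- bounds
  have hv00 : 0 ≤ v₀ := le_trans (norm_nonneg _) (hbd 0)
  obtain ⟨M1, hM1⟩ := (hsupp.deriv).exists_bound_of_continuous hd3.continuous
  obtain ⟨M2, hM2⟩ := (hsupp.deriv.deriv).exists_bound_of_continuous hc4
  have hM10 : 0 ≤ M1 := le_trans (norm_nonneg _) (hM1 0)
  have hM20 : 0 ≤ M2 := le_trans (norm_nonneg _) (hM2 0)
  set c : ℝ := 1 - v₀ with hc_def
  have hc0 : 0 < c := by simp [hc_def]; linarith
  -- constants
  set Q0 : ℝ := c⁻¹ with hQ0_def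
  set Q1 : ℝ := M1 / c^2 with hQ1_def
  set Q2 : ℝ := M2 / c^2 + 2 * M1^2 / c^3 with hQ2_def
  have hQ00 : 0 ≤ Q0 := by positivity
  have hQ10 : 0 ≤ Q1 := by positivity
  have hQ20 : 0 ≤ Q2 := by positivity
  set B1 : ℝ := Q0 * M1 + Q1 * v₀ with hB1_def
  set B2 : ℝ := Q0 * M2 + Q1 * M1 + (Q1 * M1 + Q2 * v₀) with hB2_def
  have hB10 : 0 ≤ B1 := by positivity
  have hB20 : 0 ≤ B2 := by positivity
  set A : ℝ := Q0 * B2 + Q1 * B1 with hA_def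
  have hA0 : 0 ≤ A := by positivity
  refine ⟨2 * R * A, ?_⟩
  intro p hp
  set P : ℝ := ‖p‖ with hP_def
  have hP0 : 0 < P := lt_of_lt_of_le one_pos hp
  -- the phase derivative and friends
  set φ : ℝ → ℝ := fun t => P - (inner ℝ p (deriv x t) : ℝ) with φ_def
  set φ' : ℝ → ℝ := fun t => -(inner ℝ p (deriv (deriv x) t) : ℝ) with φ'_def
  set φ'' : ℝ → ℝ := fun t => -(inner ℝ p (deriv (deriv (deriv x)) t) : ℝ) with φ''_def
  have hφ_lb : ∀ t, c * P ≤ φ t := by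
    intro t
    have h1 : (inner ℝ p (deriv x t) : ℝ) ≤ P * v₀ := by
      calc (inner ℝ p (deriv x t) : ℝ) ≤ ‖p‖ * ‖deriv x t‖ := real_inner_le_norm p _
        _ ≤ P * v₀ := by
            rw [← hP_def]
            exact mul_le_mul_of_nonneg_left (hbd t) hP0.le
    calc c * P = P - P * v₀ := by rw [hc_def]; ring
      _ ≤ φ t := by rw [φ_def]; simp only []; linarith
  have hφ_pos : ∀ t, 0 < φ t := fun t => lt_of_lt_of_le (mul_pos hc0 hP0) (hφ_lb t)
  have hinner : ∀ (g : ℝ → E3) (t : ℝ) (gd : E3), HasDerivAt g gd t →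
      HasDerivAt (fun s => (inner ℝ p (g s) : ℝ)) (inner ℝ p gd) t := by
    intro g t gd hg
    have h := (innerSL ℝ p).hasFDerivAt.comp_hasDerivAt t hg
    exact h
  have hψ : ∀ t, HasDerivAt (fun s => psi x p s) (φ t) t := by
    intro t
    have h1 : HasDerivAt (fun s : ℝ => ‖p‖ * s) ‖p‖ t := by
      simpa using (hasDerivAt_id t).const_mul ‖p‖
    have h2 := hinner x t (deriv x t) ((hx1 t).hasDerivAt)
    have h3 := h1.sub h2
    rw [φ_def]
    simp only [psi, hP_def]
    exact h3
  have hφd : ∀ t, HasDerivAt φ (φ' t) t := by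
    intro t
    have h2 := hinner (deriv x) t (deriv (deriv x) t) ((hd2 t).hasDerivAt)
    have h3 := (hasDerivAt_const t P).sub h2
    rw [φ_def, φ'_def]
    exact h3.congr_deriv (by simp)
  have hφ'd : ∀ t, HasDerivAt φ' (φ'' t) t := by
    intro t
    have h2 := hinner (deriv (deriv x)) t (deriv (deriv (deriv x)) t) ((hd3 t).hasDerivAt)
    rw [φ'_def, φ''_def]
    exact h2.neg
  -- complex-valued phase multiplier
  set z : ℝ → ℂ := fun t => Complex.I * ((φ t : ℝ) : ℂ) with z_def
  set zd : ℝ → ℂ := fun t => Complex.I * ((φ' t : ℝ) : ℂ) with zd_def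
  have hz0 : ∀ t, z t ≠ 0 := by
    intro t
    rw [z_def]
    exact mul_ne_zero Complex.I_ne_zero (by exact_mod_cast (hφ_pos t).ne')
  have hofR : ∀ (g gd : ℝ → ℝ), (∀ t, HasDerivAt g (gd t) t) →
      ∀ t, HasDerivAt (fun s => ((g s : ℝ) : ℂ)) ((gd t : ℂ)) t := by
    intro g gd hg t
    have h := Complex.ofRealCLM.hasFDerivAt.comp_hasDerivAt t (hg t)
    exact (hg t).ofReal_comp
  have hzd : ∀ t, HasDerivAt z (zd t) t := by
    intro t
    rw [z_def, zd_def]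
    exact ((hofR φ φ' hφd) t).const_mul Complex.I
  have hzdd : ∀ t, HasDerivAt zd (Complex.I * ((φ'' t : ℝ) : ℂ)) t := by
    intro t
    rw [zd_def]
    exact ((hofR φ' φ'' hφ'd) t).const_mul Complex.I
  -- the oscillating factor
  set F : ℝ → ℂ := fun t => Complex.exp (Complex.I * (psi x p t : ℂ)) with F_def
  have hFd : ∀ t, HasDerivAt F (z t * F t) t := by
    intro t
    have h1 : HasDerivAt (fun s => ((psi x p s : ℝ) : ℂ)) ((φ t : ℂ)) t := by
      have h := Complex.ofRealCLM.hasFDerivAt.comp_hasDerivAt t (hψ t)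
      exact (hψ t).ofReal_comp
    have h2 := (h1.const_mul Complex.I).cexp
    rw [F_def, z_def]
    convert h2 using 1
    ring
  have hFnorm : ∀ t, ‖F t‖ = 1 := by
    intro t
    rw [F_def]
    simp only [mul_comm Complex.I]
    exact Complex.norm_exp_ofReal_mul_I _
  -- inverse multiplier and its derivatives
  set q : ℝ → ℂ := fun t => (z t)⁻¹ with q_def
  set qd : ℝ → ℂ := fun t => -(zd t) * (z t * z t)⁻¹ with qd_def
  set qdd : ℝ → ℂ := fun t =>
    2 * (zd t) ^ 2 * ((z t)⁻¹) ^ 3 - (Complex.I * ((φ'' t : ℝ) : ℂ)) * ((z t) ^ 2)⁻¹ with qdd_def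
  have hqd' : ∀ t, HasDerivAt q (qd t) t := by
    intro t
    have h := (hasDerivAt_inv (hz0 t)).scomp t (hzd t)
    rw [q_def, qd_def]
    refine h.congr_deriv ?_
    rw [smul_eq_mul]
    ring
  have hqdd' : ∀ t, HasDerivAt qd (qdd t) t := by
    intro t
    have hsq : HasDerivAt (fun s => z s * z s) (zd t * z t + z t * zd t) t :=
      (hzd t).mul (hzd t)
    have hb : HasDerivAt (fun s => ((z s * z s)⁻¹))
        ((zd t * z t + z t * zd t) • (-((z t * z t) ^ 2)⁻¹)) t :=
      (hasDerivAt_inv (mul_ne_zero (hz0 t) (hz0 t))).scomp t hsq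
    have h := ((hzdd t).neg).mul hb
    rw [qd_def, qdd_def]
    refine h.congr_deriv ?_
    rw [smul_eq_mul]
    rw [Pi.neg_apply]
    have h2 : z t ≠ 0 := hz0 t
    field_simp
    ring
  -- the vector-valued integrand and its derivatives
  set f : ℝ → C3 := fun t => cmap (deriv x t) with f_def
  set fd : ℝ → C3 := fun t => cmap (deriv (deriv x) t) with fd_def
  set fdd : ℝ → C3 := fun t => cmap (deriv (deriv (deriv x)) t) with fdd_def
  have hfder : ∀ t, HasDerivAt f (fd t) t := by
    intro t
    have h := cmapL.hasFDerivAt.comp_hasDerivAt t ((hd2 t).hasDerivAt)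
    rw [f_def, fd_def]
    exact h
  have hfdder : ∀ t, HasDerivAt fd (fdd t) t := by
    intro t
    have h := cmapL.hasFDerivAt.comp_hasDerivAt t ((hd3 t).hasDerivAt)
    rw [fd_def, fdd_def]
    exact h
  -- w1 and w2
  set w1 : ℝ → C3 := fun t => q t • f t with w1_def
  set w1d : ℝ → C3 := fun t => q t • fd t + qd t • f t with w1d_def
  have hw1 : ∀ t, HasDerivAt w1 (w1d t) t := by
    intro t
    rw [w1_def, w1d_def]
    exact (hqd' t).smul (hfder t)
  set w1dd : ℝ → C3 := fun t => (q t • fdd t + qd t • fd t) + (qd t • fd t + qdd t • f t)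
    with w1dd_def
  have hw1d : ∀ t, HasDerivAt w1d (w1dd t) t := by
    intro t
    rw [w1d_def, w1dd_def]
    exact ((hqd' t).smul (hfdder t)).add ((hqdd' t).smul (hfder t))
  set w2 : ℝ → C3 := fun t => q t • w1d t with w2_def
  set w2d : ℝ → C3 := fun t => q t • w1dd t + qd t • w1d t with w2d_def
  have hw2 : ∀ t, HasDerivAt w2 (w2d t) t := by
    intro t
    rw [w2_def, w2d_def]
    exact (hqd' t).smul (hw1d t)
  -- continuity facts
  have hzc : Continuous z := continuous_iff_continuousAt.2 fun t => (hzd t).continuousAt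
  have hzdc : Continuous zd := continuous_iff_continuousAt.2 fun t => (hzdd t).continuousAt
  have hqc : Continuous q := continuous_iff_continuousAt.2 fun t => (hqd' t).continuousAt
  have hqdc : Continuous qd := continuous_iff_continuousAt.2 fun t => (hqdd' t).continuousAt
  have hφ''c : Continuous φ'' := by
    rw [φ''_def]
    exact (continuous_const.inner hc4).neg
  have hqddc : Continuous qdd := by
    rw [qdd_def]
    apply Continuous.sub
    · exact (continuous_const.mul (hzdc.pow 2)).mul ((hzc.inv₀ hz0).pow 3)
    · exact (continuous_const.mul (Complex.continuous_ofReal.comp hφ''c)).mul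
        ((hzc.pow 2).inv₀ fun t => pow_ne_zero 2 (hz0 t))
  have hfc : Continuous f := by
    rw [f_def]
    exact cmapL.continuous.comp hx2.continuous
  have hfdc : Continuous fd := by
    rw [fd_def]
    exact cmapL.continuous.comp hx3.continuous
  have hfddc : Continuous fdd := by
    rw [fdd_def]
    exact cmapL.continuous.comp hc4
  have hw1dc : Continuous w1d := by
    rw [w1d_def]
    exact (hqc.smul hfdc).add (hqdc.smul hfc)
  have hw1ddc : Continuous w1dd := by
    rw [w1dd_def]
    exact ((hqc.smul hfddc).add (hqdc.smul hfdc)).add ((hqdc.smul hfdc).add (hqddc.smul hfc))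
  have hw2dc : Continuous w2d := by
    rw [w2d_def]
    exact (hqc.smul hw1ddc).add (hqdc.smul hw1dc)
  have hFc : Continuous F := continuous_iff_continuousAt.2 fun t => (hFd t).continuousAt
  -- integration by parts
  have key : ∀ (w wd : ℝ → C3), (∀ t, HasDerivAt w (wd t) t) → Continuous wd →
      w (-R) = 0 → w R = 0 →
      (∫ t in (-R)..R, F t • (z t • w t)) = -∫ t in (-R)..R, F t • wd t := by
    intro w wd hw hwc hwa hwb
    have hwcont : Continuous w := continuous_iff_continuousAt.2 fun t => (hw t).continuousAt
    have hG : ∀ t ∈ Set.uIcc (-R) R,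
        HasDerivAt (fun s => F s • w s) (F t • wd t + (z t * F t) • w t) t :=
      fun t _ => (hFd t).smul (hw t)
    have hint1 : IntervalIntegrable (fun t => F t • wd t) volume (-R) R :=
      (hFc.smul hwc).intervalIntegrable _ _
    have hint2 : IntervalIntegrable (fun t => (z t * F t) • w t) volume (-R) R :=
      ((hzc.mul hFc).smul hwcont).intervalIntegrable _ _
    have h0 : (∫ t in (-R)..R, (F t • wd t + (z t * F t) • w t)) = 0 := by
      rw [intervalIntegral.integral_eq_sub_of_hasDerivAt hG (hint1.add hint2)]
      rw [hwa, hwb]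
      simp
    rw [intervalIntegral.integral_add hint1 hint2] at h0
    have heq : (∫ t in (-R)..R, F t • (z t • w t)) = ∫ t in (-R)..R, (z t * F t) • w t := by
      refine intervalIntegral.integral_congr fun t _ => ?_
      rw [smul_smul, mul_comm]
    rw [heq]
    exact eq_neg_of_add_eq_zero_right h0
  -- boundary values
  have hnR : R ∉ K := hRK R (by simp)
  have hnR' : -R ∉ K := hRK (-R) (by simp)
  have hcmap0 : cmap 0 = 0 := by simpa using (map_zero cmapL)
  have hf0 : ∀ t, t ∉ K → f t = 0 := by
    intro t ht
    show cmap (deriv x t) = 0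
    rw [hzero1 t ht, hcmap0]
  have hfd0 : ∀ t, t ∉ K → fd t = 0 := by
    intro t ht
    show cmap (deriv (deriv x) t) = 0
    rw [hzero2 t ht, hcmap0]
  have hw1R : w1 R = 0 := by show q R • f R = 0; rw [hf0 R hnR, smul_zero]
  have hw1R' : w1 (-R) = 0 := by show q (-R) • f (-R) = 0; rw [hf0 (-R) hnR', smul_zero]
  have hw1dR : w1d R = 0 := by
    show q R • fd R + qd R • f R = 0
    rw [hf0 R hnR, hfd0 R hnR, smul_zero, smul_zero, add_zero]
  have hw1dR' : w1d (-R) = 0 := by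
    show q (-R) • fd (-R) + qd (-R) • f (-R) = 0
    rw [hf0 (-R) hnR', hfd0 (-R) hnR', smul_zero, smul_zero, add_zero]
  have hw2R : w2 R = 0 := by show q R • w1d R = 0; rw [hw1dR, smul_zero]
  have hw2R' : w2 (-R) = 0 := by show q (-R) • w1d (-R) = 0; rw [hw1dR', smul_zero]
  -- the chain of identities
  have hsub : Function.support (fun t => F t • f t) ⊆ Set.Ioc (-R) R := by
    intro t ht
    simp only [Function.mem_support] at ht
    have h1 : t ∈ K := by
      by_contra h
      exact ht (by rw [hf0 t h, smul_zero])
    exact Set.Ioo_subset_Ioc_self (hKR h1)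
  have hJ1 : Jrad x p = ∫ t in (-R)..R, F t • f t := by
    have hfun : (fun t => Complex.exp (Complex.I * (psi x p t : ℂ)) • cmap (deriv x t)) =
        fun t => F t • f t := rfl
    rw [Jrad, hfun, ← intervalIntegral.integral_eq_integral_of_support_subset hsub]
  have e1 : (∫ t in (-R)..R, F t • f t) = ∫ t in (-R)..R, F t • (z t • w1 t) := by
    refine intervalIntegral.integral_congr fun t _ => ?_
    have h : z t • w1 t = f t := smul_inv_smul₀ (hz0 t) (f t)
    rw [h]
  have e2 := key w1 w1d hw1 hw1dc hw1R' hw1R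
  have e3 : (∫ t in (-R)..R, F t • w1d t) = ∫ t in (-R)..R, F t • (z t • w2 t) := by
    refine intervalIntegral.integral_congr fun t _ => ?_
    have h : z t • w2 t = w1d t := smul_inv_smul₀ (hz0 t) (w1d t)
    rw [h]
  have e4 := key w2 w2d hw2 hw2dc hw2R' hw2R
  have hJ2 : Jrad x p = ∫ t in (-R)..R, F t • w2d t := by
    rw [hJ1, e1, e2, e3, e4, neg_neg]
  -- norm estimates
  have hPinv : (0:ℝ) ≤ P⁻¹ := inv_nonneg.2 hP0.le
  have hznorm : ∀ t, ‖z t‖ = φ t := by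
    intro t
    have h : ‖z t‖ = |φ t| := by
      show ‖Complex.I * ((φ t : ℝ) : ℂ)‖ = |φ t|
      simp
    rw [h]
    exact abs_of_pos (hφ_pos t)
  have hzdnorm : ∀ t, ‖zd t‖ = |φ' t| := by
    intro t
    show ‖Complex.I * ((φ' t : ℝ) : ℂ)‖ = |φ' t|
    simp
  have hφ'le : ∀ t, |φ' t| ≤ P * M1 := by
    intro t
    have h0 : |φ' t| = |(inner ℝ p (deriv (deriv x) t) : ℝ)| := by
      show |-(inner ℝ p (deriv (deriv x) t) : ℝ)| = _
      rw [abs_neg]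
    rw [h0]
    calc |(inner ℝ p (deriv (deriv x) t) : ℝ)| ≤ ‖p‖ * ‖deriv (deriv x) t‖ :=
          abs_real_inner_le_norm p _
      _ ≤ P * M1 := by
          rw [← hP_def]
          exact mul_le_mul_of_nonneg_left (hM1 t) hP0.le
  have hφ''le : ∀ t, |φ'' t| ≤ P * M2 := by
    intro t
    have h0 : |φ'' t| = |(inner ℝ p (deriv (deriv (deriv x)) t) : ℝ)| := by
      show |-(inner ℝ p (deriv (deriv (deriv x)) t) : ℝ)| = _
      rw [abs_neg]
    rw [h0]
    calc |(inner ℝ p (deriv (deriv (deriv x)) t) : ℝ)| ≤ ‖p‖ * ‖deriv (deriv (deriv x)) t‖ :=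
          abs_real_inner_le_norm p _
      _ ≤ P * M2 := by
          rw [← hP_def]
          exact mul_le_mul_of_nonneg_left (hM2 t) hP0.le
  have hcP : (0:ℝ) < c * P := mul_pos hc0 hP0
  have hcne : c ≠ 0 := hc0.ne'
  have hPne : P ≠ 0 := hP0.ne'
  have hq_le : ∀ t, ‖q t‖ ≤ Q0 * P⁻¹ := by
    intro t
    show ‖(z t)⁻¹‖ ≤ Q0 * P⁻¹
    rw [norm_inv, hznorm t]
    calc (φ t)⁻¹ ≤ (c * P)⁻¹ := inv_anti₀ hcP (hφ_lb t)
      _ = Q0 * P⁻¹ := by rw [hQ0_def, mul_inv]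
  have hqd_le : ∀ t, ‖qd t‖ ≤ Q1 * P⁻¹ := by
    intro t
    show ‖-(zd t) * (z t * z t)⁻¹‖ ≤ Q1 * P⁻¹
    rw [norm_mul, norm_neg, hzdnorm t, norm_inv, norm_mul, hznorm t, ← div_eq_mul_inv]
    calc |φ' t| / (φ t * φ t) ≤ (P * M1) / ((c * P) * (c * P)) :=
          div_le_div₀ (mul_nonneg hP0.le hM10) (hφ'le t) (mul_pos hcP hcP)
            (mul_le_mul (hφ_lb t) (hφ_lb t) hcP.le (hφ_pos t).le)
      _ = Q1 * P⁻¹ := by rw [hQ1_def]; field_simp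
  have hqdd_le : ∀ t, ‖qdd t‖ ≤ Q2 * P⁻¹ := by
    intro t
    have ha : ‖2 * zd t ^ 2 * ((z t)⁻¹) ^ 3‖ = 2 * |φ' t| ^ 2 * ((φ t)⁻¹) ^ 3 := by
      rw [norm_mul, norm_mul, norm_pow, norm_pow, norm_inv, hzdnorm t, hznorm t]
      norm_num
    have hb : ‖Complex.I * ((φ'' t : ℝ) : ℂ) * (z t ^ 2)⁻¹‖ = |φ'' t| * ((φ t) ^ 2)⁻¹ := by
      rw [norm_mul, norm_mul, norm_inv, norm_pow, hznorm t]
      simp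
    calc ‖qdd t‖ ≤ ‖2 * zd t ^ 2 * ((z t)⁻¹) ^ 3‖ + ‖Complex.I * ((φ'' t : ℝ) : ℂ) * (z t ^ 2)⁻¹‖ := by
          show ‖2 * zd t ^ 2 * ((z t)⁻¹) ^ 3 - Complex.I * ((φ'' t : ℝ) : ℂ) * (z t ^ 2)⁻¹‖ ≤ _
          exact norm_sub_le _ _
      _ = 2 * |φ' t| ^ 2 / (φ t) ^ 3 + |φ'' t| / (φ t) ^ 2 := by
          rw [ha, hb, inv_pow, ← div_eq_mul_inv, ← div_eq_mul_inv]
      _ ≤ 2 * (P * M1) ^ 2 / (c * P) ^ 3 + (P * M2) / (c * P) ^ 2 := by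
          refine add_le_add ?_ ?_
          · refine div_le_div₀ (by positivity) ?_ (pow_pos hcP 3)
              (pow_le_pow_left₀ hcP.le (hφ_lb t) 3)
            have := pow_le_pow_left₀ (abs_nonneg (φ' t)) (hφ'le t) 2
            linarith
          · exact div_le_div₀ (mul_nonneg hP0.le hM20) (hφ''le t) (pow_pos hcP 2)
              (pow_le_pow_left₀ hcP.le (hφ_lb t) 2)
      _ = Q2 * P⁻¹ := by rw [hQ2_def]; field_simp; ring
  have hf_le : ∀ t, ‖f t‖ ≤ v₀ := by
    intro t
    show ‖cmap (deriv x t)‖ ≤ v₀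
    rw [norm_cmap]
    exact hbd t
  have hfd_le : ∀ t, ‖fd t‖ ≤ M1 := by
    intro t
    show ‖cmap (deriv (deriv x) t)‖ ≤ M1
    rw [norm_cmap]
    exact hM1 t
  have hfdd_le : ∀ t, ‖fdd t‖ ≤ M2 := by
    intro t
    show ‖cmap (deriv (deriv (deriv x)) t)‖ ≤ M2
    rw [norm_cmap]
    exact hM2 t
  have hQ0P : (0:ℝ) ≤ Q0 * P⁻¹ := mul_nonneg hQ00 hPinv
  have hQ1P : (0:ℝ) ≤ Q1 * P⁻¹ := mul_nonneg hQ10 hPinv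
  have hQ2P : (0:ℝ) ≤ Q2 * P⁻¹ := mul_nonneg hQ20 hPinv
  have hw1d_le : ∀ t, ‖w1d t‖ ≤ B1 * P⁻¹ := by
    intro t
    calc ‖w1d t‖ ≤ ‖q t‖ * ‖fd t‖ + ‖qd t‖ * ‖f t‖ := by
          simpa [norm_smul] using norm_add_le (q t • fd t) (qd t • f t)
      _ ≤ (Q0 * P⁻¹) * M1 + (Q1 * P⁻¹) * v₀ :=
          add_le_add (mul_le_mul (hq_le t) (hfd_le t) (norm_nonneg _) hQ0P)
            (mul_le_mul (hqd_le t) (hf_le t) (norm_nonneg _) hQ1P)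
      _ = B1 * P⁻¹ := by rw [hB1_def]; ring
  have hw1dd_le : ∀ t, ‖w1dd t‖ ≤ B2 * P⁻¹ := by
    intro t
    have h1 : ‖q t • fdd t + qd t • fd t‖ ≤ ‖q t‖ * ‖fdd t‖ + ‖qd t‖ * ‖fd t‖ := by
      simpa [norm_smul] using norm_add_le (q t • fdd t) (qd t • fd t)
    have h2 : ‖qd t • fd t + qdd t • f t‖ ≤ ‖qd t‖ * ‖fd t‖ + ‖qdd t‖ * ‖f t‖ := by
      simpa [norm_smul] using norm_add_le (qd t • fd t) (qdd t • f t)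
    calc ‖w1dd t‖ ≤ ‖q t • fdd t + qd t • fd t‖ + ‖qd t • fd t + qdd t • f t‖ := by
          show ‖(q t • fdd t + qd t • fd t) + (qd t • fd t + qdd t • f t)‖ ≤ _
          exact norm_add_le _ _
      _ ≤ (‖q t‖ * ‖fdd t‖ + ‖qd t‖ * ‖fd t‖) + (‖qd t‖ * ‖fd t‖ + ‖qdd t‖ * ‖f t‖) :=
          add_le_add h1 h2
      _ ≤ ((Q0 * P⁻¹) * M2 + (Q1 * P⁻¹) * M1) + ((Q1 * P⁻¹) * M1 + (Q2 * P⁻¹) * v₀) :=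
          add_le_add
            (add_le_add (mul_le_mul (hq_le t) (hfdd_le t) (norm_nonneg _) hQ0P)
              (mul_le_mul (hqd_le t) (hfd_le t) (norm_nonneg _) hQ1P))
            (add_le_add (mul_le_mul (hqd_le t) (hfd_le t) (norm_nonneg _) hQ1P)
              (mul_le_mul (hqdd_le t) (hf_le t) (norm_nonneg _) hQ2P))
      _ = B2 * P⁻¹ := by rw [hB2_def]; ring
  have hB1P : (0:ℝ) ≤ B1 * P⁻¹ := mul_nonneg hB10 hPinv
  have hB2P : (0:ℝ) ≤ B2 * P⁻¹ := mul_nonneg hB20 hPinv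
  have hw2d_le : ∀ t, ‖w2d t‖ ≤ A * (P⁻¹ * P⁻¹) := by
    intro t
    calc ‖w2d t‖ ≤ ‖q t‖ * ‖w1dd t‖ + ‖qd t‖ * ‖w1d t‖ := by
          simpa [norm_smul] using norm_add_le (q t • w1dd t) (qd t • w1d t)
      _ ≤ (Q0 * P⁻¹) * (B2 * P⁻¹) + (Q1 * P⁻¹) * (B1 * P⁻¹) :=
          add_le_add (mul_le_mul (hq_le t) (hw1dd_le t) (norm_nonneg _) hQ0P)
            (mul_le_mul (hqd_le t) (hw1d_le t) (norm_nonneg _) hQ1P)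
      _ = A * (P⁻¹ * P⁻¹) := by rw [hA_def]; ring
  -- conclusion
  have hbound : ‖Jrad x p‖ ≤ (A * (P⁻¹ * P⁻¹)) * |R - (-R)| := by
    rw [hJ2]
    refine intervalIntegral.norm_integral_le_of_norm_le_const fun t _ => ?_
    rw [norm_smul, hFnorm t, one_mul]
    exact hw2d_le t
  have habs : |R - (-R)| = 2 * R := by
    rw [abs_of_pos (by linarith : (0:ℝ) < R - (-R))]
    ring
  rw [habs] at hbound
  calc ‖Jrad x p‖ ≤ A * (P⁻¹ * P⁻¹) * (2 * R) := hbound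
    _ = 2 * R * A / P ^ 2 := by field_simp


end
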